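/- Let G be a finite group and let (𝒳,𝒦) and (𝒴,𝓛) be supercharacter theories of G. Then (𝒳∨𝒴, 𝒦∨𝓛) is also a supercharacter theory of G, where ∨ denotes the join in the lattices of partitions of Irr(G) and of G respectively. -/

import Mathlib

open scoped Classical

noncomputable section

/-- The set of irreducible complex characters of `G`. -/
def Irr (G : Type) [Group G] : Set (G → ℂ) :=
  {χ | ∃ V : FDRep ℂ G, CategoryTheory.Simple V ∧ FDRep.character V = χ}

/-- `σ_X = ∑_{ψ ∈ X} ψ(1)·ψ`. -/
def sigmaChar {G : Type} [Group G] (X : Set (G → ℂ)) : G → ℂ :=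
  fun g => ∑ᶠ ψ ∈ X, ψ 1 * ψ g

/-- `P` is a set partition of the set `S`. -/
def IsPartitionOf {α : Type*} (S : Set α) (P : Set (Set α)) : Prop :=
  ∅ ∉ P ∧ (∀ p ∈ P, p ⊆ S) ∧ ∀ a ∈ S, ∃! p, p ∈ P ∧ a ∈ p

/-- `(𝒳, 𝒦)` is a supercharacter theory of the finite group `G`. -/
def IsSCT (G : Type) [Group G] [Finite G]
    (𝒳 : Set (Set (G → ℂ))) (𝒦 : Set (Set G)) : Prop :=
  IsPartitionOf (Irr G) 𝒳 ∧ IsPartitionOf Set.univ 𝒦 ∧ 𝒳.ncard = 𝒦.ncard ∧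
    ({1} : Set G) ∈ 𝒦 ∧
    ∀ X ∈ 𝒳, ∀ K ∈ 𝒦, ∀ g ∈ K, ∀ h ∈ K, sigmaChar X g = sigmaChar X h

/-- `K̂ = ∑_{g ∈ K} g ∈ ℂ[G]`. -/
def ghat {G : Type} [Group G] (K : Set G) : MonoidAlgebra ℂ G :=
  ∑ᶠ g ∈ K, MonoidAlgebra.single g (1 : ℂ)

/-- The central idempotent `e_χ = (χ(1)/|G|) ∑_g conj(χ g)·g` attached to a character. -/
def eIdem (G : Type) [Group G] (χ : G → ℂ) : MonoidAlgebra ℂ G :=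
  (χ 1 / (Nat.card G : ℂ)) •
    ∑ᶠ g : G, (starRingEnd ℂ) (χ g) • MonoidAlgebra.single g (1 : ℂ)

/-- `f_X = ∑_{ψ ∈ X} e_ψ`. -/
def fIdem (G : Type) [Group G] (X : Set (G → ℂ)) : MonoidAlgebra ℂ G :=
  ∑ᶠ χ ∈ X, eIdem G χ

/-- Partition order: every part of `P` lies in some part of `Q`. -/
def PartLE {α : Type*} (P Q : Set (Set α)) : Prop := ∀ p ∈ P, ∃ q ∈ Q, p ⊆ q

/-- The join of two partitions of the same set: parts are connected components of
the relation "lying in a common part of `P` or of `Q`". -/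
def PartJoin {α : Type*} (P Q : Set (Set α)) : Set (Set α) :=
  {C | ∃ a ∈ ⋃₀ P, C = {b | Relation.ReflTransGen
      (fun x y => (∃ p ∈ P, x ∈ p ∧ y ∈ p) ∨ ∃ q ∈ Q, x ∈ q ∧ y ∈ q) a b}}

/-- Inner product of complex-valued functions on a finite group. -/
def cInner (H : Type) [Group H] (α β : H → ℂ) : ℂ :=
  (Nat.card H : ℂ)⁻¹ * ∑ᶠ h : H, α h * (starRingEnd ℂ) (β h)

/-- Restriction of a function on `G` to a subgroup. -/
def resChar {G : Type} [Group G] (H : Subgroup G) (χ : G → ℂ) : ↥H → ℂ := fun h => χ ↑h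

/-- Extension by zero of a function on a subgroup. -/
def zeroExtend {G : Type} [Group G] (H : Subgroup G) (φ : ↥H → ℂ) : G → ℂ :=
  fun g => if h : g ∈ H then φ ⟨g, h⟩ else 0

/-- The induced class function `φ^G`. -/
def indChar {G : Type} [Group G] (H : Subgroup G) (φ : ↥H → ℂ) : G → ℂ :=
  fun g => (Nat.card ↥H : ℂ)⁻¹ * ∑ᶠ x : G, zeroExtend H φ (x⁻¹ * g * x)

/-- The superclass of `x` with respect to a partition `𝒦` of `G`. -/
def sclass {G : Type} [Group G] (𝒦 : Set (Set G)) (x : G) : Set G := ⋃₀ {K ∈ 𝒦 | x ∈ K}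

/-- Superinduction: `φ^{(G)}(x) = [G:H]·(1/|[x]|)·∑_{y ∈ [x]} φ⁰(y)`. -/
def superInd {G : Type} [Group G] (𝒦 : Set (Set G)) (H : Subgroup G) (φ : ↥H → ℂ) : G → ℂ :=
  fun x => (H.index : ℂ) * (((sclass 𝒦 x).ncard : ℂ))⁻¹ * ∑ᶠ y ∈ sclass 𝒦 x, zeroExtend H φ y

/-- A subgroup is `𝒞`-normal when it is a union of superclasses. -/
def CNormal {G : Type} [Group G] (𝒦 : Set (Set G)) (N : Subgroup G) : Prop :=
  ∃ T ⊆ 𝒦, (N : Set G) = ⋃₀ T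

/-- `Irr(G/N)` viewed inside `Irr(G)`: irreducible characters with `N` in their kernel. -/
def IrrOver {G : Type} [Group G] (N : Subgroup G) : Set (G → ℂ) :=
  {χ ∈ Irr G | ∀ n ∈ N, χ n = χ 1}

/-- The set of irreducible constituents of the restriction of `θ` to `N`. -/
def constituentsOn {G : Type} [Group G] (N : Subgroup G) (θ : G → ℂ) : Set (↥N → ℂ) :=
  {ψ ∈ Irr ↥N | cInner ↥N (resChar N θ) ψ ≠ 0}

/-- `Irr(G|ψ)`: irreducible characters of `G` lying over `ψ ∈ Irr(N)`. -/
def irrOverChar {G : Type} [Group G] (N : Subgroup G) (ψ : ↥N → ℂ) : Set (G → ℂ) :=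
  {χ ∈ Irr G | cInner ↥N (resChar N χ) ψ ≠ 0}

/-- `X^G = ⋃_{ψ ∈ X} Irr(G|ψ)` for `X ⊆ Irr(N)`. -/
def indSet {G : Type} [Group G] (N : Subgroup G) (X : Set (↥N → ℂ)) : Set (G → ℂ) :=
  ⋃ ψ ∈ X, irrOverChar N ψ

/-- Conjugation of a normal subgroup by a group element. -/
def conjSub {G : Type} [Group G] {N : Subgroup G} (hN : N.Normal) (g : G) (n : ↥N) : ↥N :=
  ⟨g * ↑n * g⁻¹, hN.conj_mem ↑n n.2 g⟩

/-- The conjugation action of `g ∈ G` on class functions of a normal subgroup `N`. -/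
def charConj {G : Type} [Group G] {N : Subgroup G} (hN : N.Normal) (g : G)
    (ψ : ↥N → ℂ) : ↥N → ℂ :=
  fun n => ψ (conjSub hN g⁻¹ n)

/-- Inflation of a set of characters of `G/N` to characters of `G`. -/
def inflateSet {G : Type} [Group G] (N : Subgroup G) [N.Normal]
    (Y : Set (G ⧸ N → ℂ)) : Set (G → ℂ) :=
  (fun η => η ∘ (QuotientGroup.mk : G → G ⧸ N)) '' Y

/-- Deflation of a set of characters of `G` (with `N` in their kernels) to characters
of `G/N`. -/
def deflate {G : Type} [Group G] (N : Subgroup G) [N.Normal]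
    (X : Set (G → ℂ)) : Set (G ⧸ N → ℂ) :=
  (fun χ => fun q : G ⧸ N => χ (Quotient.out q)) '' X

/-- The natural map `M → MN/N ≤ G/N`. -/
def projMN {G : Type} [Group G] (M N : Subgroup G) [N.Normal] (m : ↥M) :
    ↥(M.map (QuotientGroup.mk' N)) :=
  ⟨QuotientGroup.mk' N ↑m, Subgroup.mem_map_of_mem _ m.2⟩

end

/-!
For a partition `P` of `Irr G` the class functions `σ_X` (`X ∈ P`) are linearly independent,
because the `ψ(1)ψ` are. Hence `(𝒳, 𝒦)` is a supercharacter theory exactly when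
`span {σ_X | X ∈ 𝒳}` equals the space of functions constant on the parts of `𝒦`: the
constancy condition is one inclusion, and both spaces have dimension `|𝒳| = |𝒦|`.

For a linearly independent family, the span of the block sums over `P ∨ Q` is the
intersection of the spans over `P` and over `Q`: a vector in both has unique coefficients,
which are then constant on the parts of `P` and of `Q`, hence on those of `P ∨ Q`. Likewise a
function is constant on the parts of `𝒦 ∨ 𝓛` iff it is constant on those of `𝒦` and of `𝓛`.
Intersecting the two equalities for `(𝒳, 𝒦)` and `(𝒴, 𝓛)` gives the one for the join.
-/

open Relation Set Module Submodule

section Partition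

variable {α : Type*} {S : Set α} {P Q : Set (Set α)} {p q : Set α} {a : α}

namespace IsPartitionOf

lemma subset (hP : IsPartitionOf S P) (hp : p ∈ P) : p ⊆ S := hP.2.1 p hp

lemma eq_of_mem_of_mem (hP : IsPartitionOf S P) (hp : p ∈ P) (hq : q ∈ P) (hap : a ∈ p)
    (haq : a ∈ q) : p = q :=
  (hP.2.2 a (hP.subset hp hap)).unique ⟨hp, hap⟩ ⟨hq, haq⟩

lemma sUnion_eq (hP : IsPartitionOf S P) : ⋃₀ P = S :=
  (sUnion_subset hP.2.1).antisymm fun a ha =>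
    let ⟨p, ⟨hp, hap⟩, _⟩ := hP.2.2 a ha
    ⟨p, hp, hap⟩

lemma nonempty_of_mem (hP : IsPartitionOf S P) (hp : p ∈ P) : p.Nonempty :=
  nonempty_iff_ne_empty.2 fun h => hP.1 (h ▸ hp)

lemma pairwiseDisjoint (hP : IsPartitionOf S P) : P.PairwiseDisjoint id :=
  fun _ hp _ hq hne => disjoint_left.2 fun _ hap haq => hne (hP.eq_of_mem_of_mem hp hq hap haq)

lemma finite (hP : IsPartitionOf S P) (hS : S.Finite) : P.Finite :=
  hS.finite_subsets.subset hP.2.1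

lemma finsum_mem_eq_finsum_mem_parts {M : Type*} [AddCommMonoid M] (hP : IsPartitionOf S P)
    (hS : S.Finite) (f : α → M) : ∑ᶠ a ∈ S, f a = ∑ᶠ p ∈ P, ∑ᶠ a ∈ p, f a := by
  rw [← finsum_mem_sUnion hP.pairwiseDisjoint (hP.finite hS) fun p hp => hS.subset (hP.subset hp),
    hP.sUnion_eq]

end IsPartitionOf

def partOf (P : Set (Set α)) (a : α) : Set α := ⋃₀ {p ∈ P | a ∈ p}

lemma IsPartitionOf.partOf_eq (hP : IsPartitionOf S P) (hp : p ∈ P) (ha : a ∈ p) :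
    partOf P a = p :=
  subset_antisymm (sUnion_subset fun _ ⟨hq, haq⟩ => (hP.eq_of_mem_of_mem hq hp haq ha).le)
    (subset_sUnion_of_mem ⟨hp, ha⟩)

def JoinRel (P Q : Set (Set α)) (x y : α) : Prop :=
  (∃ p ∈ P, x ∈ p ∧ y ∈ p) ∨ ∃ q ∈ Q, x ∈ q ∧ y ∈ q

instance : Std.Symm (JoinRel P Q) where
  symm _ _ := Or.imp (fun ⟨p, hp, hx, hy⟩ => ⟨p, hp, hy, hx⟩) fun ⟨q, hq, hx, hy⟩ => ⟨q, hq, hy, hx⟩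

lemma mem_partJoin_iff {C : Set α} :
    C ∈ PartJoin P Q ↔ ∃ a ∈ ⋃₀ P, C = {b | ReflTransGen (JoinRel P Q) a b} := Iff.rfl

lemma reflTransGen_of_mem_partJoin {C : Set α} (hC : C ∈ PartJoin P Q) {x y : α} (hx : x ∈ C)
    (hy : y ∈ C) : ReflTransGen (JoinRel P Q) x y := by
  obtain ⟨a, -, rfl⟩ := mem_partJoin_iff.1 hC
  exact (Std.Symm.symm _ _ hx : ReflTransGen (JoinRel P Q) x a).trans hy

lemma IsPartitionOf.partJoin (hP : IsPartitionOf S P) (hQ : IsPartitionOf S Q) :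
    IsPartitionOf S (PartJoin P Q) := by
  have hmem : ∀ {x y}, ReflTransGen (JoinRel P Q) x y → x ∈ S → y ∈ S := fun h hx => by
    induction h with
    | refl => exact hx
    | tail _ hyz _ =>
      rcases hyz with ⟨p, hp, -, hz⟩ | ⟨q, hq, -, hz⟩
      exacts [hP.subset hp hz, hQ.subset hq hz]
  refine ⟨fun ⟨a, _, h⟩ => (h ▸ ReflTransGen.refl : a ∈ (∅ : Set α)), ?_, fun a ha => ?_⟩
  · rintro C ⟨a, ha, rfl⟩ b hb
    exact hmem hb (hP.sUnion_eq ▸ ha)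
  · refine ⟨_, ⟨⟨a, hP.sUnion_eq ▸ ha, rfl⟩, ReflTransGen.refl⟩, ?_⟩
    rintro C ⟨hC, haC⟩
    ext b
    exact ⟨fun hb => reflTransGen_of_mem_partJoin hC haC hb,
      fun hb => by obtain ⟨c, -, rfl⟩ := mem_partJoin_iff.1 hC; exact haC.trans hb⟩

lemma singleton_mem_partJoin (hP : IsPartitionOf S P) (hQ : IsPartitionOf S Q) {e : α}
    (heP : {e} ∈ P) (heQ : {e} ∈ Q) : ({e} : Set α) ∈ PartJoin P Q := by
  have hstay : ∀ {b}, ReflTransGen (JoinRel P Q) e b → b = e := fun h => by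
    induction h with
    | refl => rfl
    | tail _ hbc ih =>
      subst ih
      rcases hbc with ⟨p, hp, hb, hc⟩ | ⟨q, hq, hb, hc⟩
      exacts [mem_singleton_iff.1 (hP.eq_of_mem_of_mem hp heP hb rfl ▸ hc),
        mem_singleton_iff.1 (hQ.eq_of_mem_of_mem hq heQ hb rfl ▸ hc)]
  refine ⟨e, ⟨{e}, heP, rfl⟩, ?_⟩
  ext b
  exact ⟨fun hb => hb ▸ ReflTransGen.refl, hstay⟩

end Partition

section LinearAlgebra

variable {α R M : Type*} [Ring R] [AddCommGroup M] [Module R M] {S : Set α}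
  {P Q : Set (Set α)} {ι : α → M}

lemma mem_span_image_iff_exists_finsum {β : Type*} {v : β → M} {s : Set β} (hs : s.Finite)
    {x : M} : x ∈ span R (v '' s) ↔ ∃ c : β → R, ∑ᶠ i ∈ s, c i • v i = x := by
  rw [← hs.coe_toFinset, mem_span_image_finset_iff_exists_fun']
  simp only [finsum_mem_coe_finset]

lemma linearIndepOn_iff_finsum_smul_eq {β : Type*} {v : β → M} {s : Set β} (hs : s.Finite) :
    LinearIndepOn R v s ↔
      ∀ f g : β → R, ∑ᶠ i ∈ s, f i • v i = ∑ᶠ i ∈ s, g i • v i → ∀ i ∈ s, f i = g i := by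
  rw [← hs.coe_toFinset, linearIndepOn_finset_iffₛ]
  simp only [finsum_mem_coe_finset]
  simp only [Finset.mem_coe]

noncomputable def partSum (ι : α → M) (p : Set α) : M := ∑ᶠ a ∈ p, ι a

variable (R) in
def constOnParts (P : Set (Set α)) : Submodule R (α → R) where
  carrier := {f | ∀ p ∈ P, ∀ x ∈ p, ∀ y ∈ p, f x = f y}
  add_mem' hf hg p hp x hx y hy := congr_arg₂ (· + ·) (hf p hp x hx y hy) (hg p hp x hx y hy)
  zero_mem' _ _ _ _ _ _ := rfl
  smul_mem' r _ hf p hp x hx y hy := congr_arg (r * ·) (hf p hp x hx y hy)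

lemma mem_constOnParts {f : α → R} :
    f ∈ constOnParts R P ↔ ∀ p ∈ P, ∀ x ∈ p, ∀ y ∈ p, f x = f y := Iff.rfl

namespace IsPartitionOf

lemma finsum_mem_smul_partSum (hP : IsPartitionOf S P) (hS : S.Finite) (ι : α → M)
    (c : Set α → R) : ∑ᶠ p ∈ P, c p • partSum ι p = ∑ᶠ a ∈ S, c (partOf P a) • ι a := by
  rw [hP.finsum_mem_eq_finsum_mem_parts hS]
  refine finsum_mem_congr rfl fun p hp => ?_
  rw [partSum, smul_finsum_mem (hS.subset (hP.subset hp))]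
  exact finsum_mem_congr rfl fun a ha => by rw [hP.partOf_eq hp ha]

lemma mem_span_partSum_iff (hP : IsPartitionOf S P) (hS : S.Finite) {x : M} :
    x ∈ span R (partSum ι '' P) ↔ ∃ c ∈ constOnParts R P, ∑ᶠ a ∈ S, c a • ι a = x := by
  rw [mem_span_image_iff_exists_finsum (hP.finite hS)]
  constructor
  · rintro ⟨c, rfl⟩
    refine ⟨fun a => c (partOf P a), fun p hp x hx y hy => ?_,
      (hP.finsum_mem_smul_partSum hS ι c).symm⟩
    simp only [hP.partOf_eq hp hx, hP.partOf_eq hp hy]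
  · rintro ⟨c, hc, rfl⟩
    refine ⟨fun p => if h : p.Nonempty then c h.some else 0, ?_⟩
    rw [hP.finsum_mem_smul_partSum hS]
    refine finsum_mem_congr rfl fun a ha => ?_
    obtain ⟨p, ⟨hp, hap⟩, -⟩ := hP.2.2 a ha
    rw [hP.partOf_eq hp hap, dif_pos (show p.Nonempty from ⟨a, hap⟩),
      hc p hp _ (Nonempty.some_mem _) a hap]

lemma linearIndepOn_partSum (hP : IsPartitionOf S P) (hS : S.Finite)
    (hι : LinearIndepOn R ι S) : LinearIndepOn R (partSum ι) P := by
  rw [linearIndepOn_iff_finsum_smul_eq (hP.finite hS)]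
  intro f g hfg p hp
  rw [hP.finsum_mem_smul_partSum hS, hP.finsum_mem_smul_partSum hS] at hfg
  obtain ⟨a, ha⟩ := hP.nonempty_of_mem hp
  simpa only [hP.partOf_eq hp ha] using
    (linearIndepOn_iff_finsum_smul_eq hS).1 hι _ _ hfg a (hP.subset hp ha)

lemma finrank_span_partSum [StrongRankCondition R] (hP : IsPartitionOf S P) (hS : S.Finite)
    (hι : LinearIndepOn R ι S) : finrank R (span R (partSum ι '' P)) = P.ncard := by
  rw [finrank, ← Cardinal.toNat_toENat, toENat_rank_span_set (hP.linearIndepOn_partSum hS hι)]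
  rfl

lemma constOnParts_partJoin (hP : IsPartitionOf S P) (hQ : IsPartitionOf S Q) :
    constOnParts R (PartJoin P Q) = constOnParts R P ⊓ constOnParts R Q := by
  ext f
  simp only [mem_inf, mem_constOnParts]
  refine ⟨fun hf => ⟨fun p hp x hx y hy => ?_, fun q hq x hx y hy => ?_⟩,
    fun ⟨hfP, hfQ⟩ C hC x hx y hy => ?_⟩
  · exact hf _ ⟨x, ⟨p, hp, hx⟩, rfl⟩ x .refl y (.single (Or.inl ⟨p, hp, hx, hy⟩))
  · exact hf _ ⟨x, hP.sUnion_eq ▸ hQ.subset hq hx, rfl⟩ x .refl y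
      (.single (Or.inr ⟨q, hq, hx, hy⟩))
  · have hxy := reflTransGen_of_mem_partJoin hC hx hy
    clear hy
    induction hxy with
    | refl => rfl
    | tail _ hyz ih =>
      rcases hyz with ⟨p, hp, hy, hz⟩ | ⟨q, hq, hy, hz⟩
      exacts [ih.trans (hfP p hp _ hy _ hz), ih.trans (hfQ q hq _ hy _ hz)]

lemma span_partSum_partJoin (hP : IsPartitionOf S P) (hQ : IsPartitionOf S Q) (hS : S.Finite)
    (hι : LinearIndepOn R ι S) :
    span R (partSum ι '' PartJoin P Q) = span R (partSum ι '' P) ⊓ span R (partSum ι '' Q) := by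
  ext x
  simp only [mem_inf, (hP.partJoin hQ).mem_span_partSum_iff hS, hP.mem_span_partSum_iff hS,
    hQ.mem_span_partSum_iff hS, hP.constOnParts_partJoin hQ]
  constructor
  · rintro ⟨c, ⟨hcP, hcQ⟩, rfl⟩
    exact ⟨⟨c, hcP, rfl⟩, c, hcQ, rfl⟩
  · rintro ⟨⟨c, hcP, rfl⟩, d, hdQ, hdc⟩
    have hcd := (linearIndepOn_iff_finsum_smul_eq hS).1 hι _ _ hdc
    refine ⟨c, ⟨hcP, fun q hq x hx y hy => ?_⟩, rfl⟩
    rw [← hcd x (hQ.subset hq hx), ← hcd y (hQ.subset hq hy)]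
    exact hdQ q hq x hx y hy

lemma span_partSum_single [Fintype α] (hQ : IsPartitionOf univ Q) :
    span R (partSum (fun a => Pi.single a (1 : R)) '' Q) = constOnParts R Q := by
  ext f
  have hcomb (c : α → R) : ∑ᶠ a ∈ univ, c a • Pi.single a (1 : R) = c := by
    ext b
    simp [finsum_eq_sum_of_fintype, Finset.sum_apply, Pi.single_apply]
  simp only [hQ.mem_span_partSum_iff finite_univ, hcomb, exists_eq_right]

lemma finrank_constOnParts [Fintype α] [StrongRankCondition R] (hQ : IsPartitionOf univ Q) :
    finrank R (constOnParts R Q) = Q.ncard := by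
  rw [← hQ.span_partSum_single]
  exact hQ.finrank_span_partSum finite_univ
    ((Pi.basisFun R α).linearIndependent.linearIndepOn _)

end IsPartitionOf

end LinearAlgebra

section Characters

variable {G : Type} [Group G]

lemma irr_orthonormal [Fintype G] {χ ψ : G → ℂ} (hχ : χ ∈ Irr G) (hψ : ψ ∈ Irr G) :
    (Nat.card G : ℂ)⁻¹ * ∑ g, χ g * ψ g⁻¹ = if χ = ψ then 1 else 0 := by
  obtain ⟨V, _, rfl⟩ := hχ
  obtain ⟨W, _, rfl⟩ := hψ
  have : Invertible (Nat.card G : ℂ) := invertibleOfNonzero (Nat.cast_ne_zero.2 Nat.card_pos.ne')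
  split_ifs with h
  · rw [h, FDRep.char_orthonormal, if_pos ⟨CategoryTheory.Iso.refl W⟩]
  · rw [FDRep.char_orthonormal, if_neg fun ⟨i⟩ => h (FDRep.char_iso i)]

variable [Finite G]

lemma linearIndepOn_irr : LinearIndepOn ℂ id (Irr G) := by
  have := Fintype.ofFinite G
  refine LinearIndependent.of_pairwise_dual_eq_zero_one _
    (fun ψ : Irr G => (Nat.card G : ℂ)⁻¹ • ∑ g, (ψ : G → ℂ) g⁻¹ • LinearMap.proj g)
    (fun ψ χ hne => ?_) fun ψ => ?_
  · simpa [mul_comm, Subtype.coe_ne_coe.2 hne.symm] using irr_orthonormal χ.2 ψ.2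
  · simpa [mul_comm] using irr_orthonormal ψ.2 ψ.2

lemma finite_irr : (Irr G).Finite :=
  linearIndepOn_irr.linearIndependent.setFinite

lemma irr_apply_one_ne_zero {χ : G → ℂ} (hχ : χ ∈ Irr G) : χ 1 ≠ 0 := by
  intro h0
  refine linearIndepOn_irr.ne_zero hχ ?_
  obtain ⟨V, _, rfl⟩ := hχ
  have : Subsingleton V :=
    finrank_zero_iff.1 (by exact_mod_cast (FDRep.char_one V).symm.trans h0)
  funext g
  change LinearMap.trace ℂ V (V.ρ g) = 0
  rw [show V.ρ g = 0 from LinearMap.ext fun _ => Subsingleton.elim _ _, map_zero]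

lemma linearIndepOn_irr_degree_smul :
    LinearIndepOn ℂ (fun ψ : G → ℂ => ψ 1 • ψ) (Irr G) :=
  linearIndepOn_irr.units_smul fun ψ => Units.mk0 _ (irr_apply_one_ne_zero ψ.2)

end Characters

section Supercharacters

variable {G : Type} [Group G]

lemma sigmaChar_eq_partSum {X : Set (G → ℂ)} (hX : X.Finite) :
    sigmaChar X = partSum (fun ψ : G → ℂ => ψ 1 • ψ) X := by
  funext g
  rw [sigmaChar, partSum, finsum_mem_eq_finite_toFinset_sum _ hX,
    finsum_mem_eq_finite_toFinset_sum _ hX, Finset.sum_apply]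
  rfl

variable [Finite G] {P 𝒳 𝒴 : Set (Set (G → ℂ))} {𝒦 : Set (Set G)}

lemma IsPartitionOf.image_sigmaChar (hP : IsPartitionOf (Irr G) P) :
    sigmaChar '' P = partSum (fun ψ : G → ℂ => ψ 1 • ψ) '' P :=
  image_congr fun _ hX => sigmaChar_eq_partSum (finite_irr.subset (hP.subset hX))

lemma IsPartitionOf.finrank_span_sigmaChar (hP : IsPartitionOf (Irr G) P) :
    finrank ℂ (span ℂ (sigmaChar '' P)) = P.ncard := by
  rw [hP.image_sigmaChar, hP.finrank_span_partSum finite_irr linearIndepOn_irr_degree_smul]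

lemma IsPartitionOf.span_sigmaChar_partJoin (hX : IsPartitionOf (Irr G) 𝒳)
    (hY : IsPartitionOf (Irr G) 𝒴) :
    span ℂ (sigmaChar '' PartJoin 𝒳 𝒴) = span ℂ (sigmaChar '' 𝒳) ⊓ span ℂ (sigmaChar '' 𝒴) := by
  rw [(hX.partJoin hY).image_sigmaChar, hX.image_sigmaChar, hY.image_sigmaChar,
    hX.span_partSum_partJoin hY finite_irr linearIndepOn_irr_degree_smul]

lemma isSCT_iff_span_sigmaChar_eq :
    IsSCT G 𝒳 𝒦 ↔ IsPartitionOf (Irr G) 𝒳 ∧ IsPartitionOf univ 𝒦 ∧ ({1} : Set G) ∈ 𝒦 ∧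
      span ℂ (sigmaChar '' 𝒳) = constOnParts ℂ 𝒦 := by
  have := Fintype.ofFinite G
  constructor
  · rintro ⟨hX, hK, hcard, hone, hconst⟩
    refine ⟨hX, hK, hone, eq_of_le_of_finrank_eq (span_le.2 ?_) ?_⟩
    · rintro _ ⟨X, hX', rfl⟩
      exact hconst X hX'
    · rw [hX.finrank_span_sigmaChar, hK.finrank_constOnParts, hcard]
  · rintro ⟨hX, hK, hone, hspan⟩
    refine ⟨hX, hK, ?_, hone, fun X hX' => ?_⟩
    · rw [← hX.finrank_span_sigmaChar, hspan, hK.finrank_constOnParts]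
    · exact (hspan ▸ subset_span (mem_image_of_mem _ hX') : sigmaChar X ∈ constOnParts ℂ 𝒦)

end Supercharacters

/-- Proposition 3.3. The coordinatewise partition join of two
supercharacter theories of `G` is again a supercharacter theory of `G`. -/
theorem stmt5 (G : Type) [Group G] [Finite G]
    (𝒳 𝒴 : Set (Set (G → ℂ))) (𝒦 𝓛 : Set (Set G))
    (h1 : IsSCT G 𝒳 𝒦) (h2 : IsSCT G 𝒴 𝓛) :
    IsSCT G (PartJoin 𝒳 𝒴) (PartJoin 𝒦 𝓛) := by
  obtain ⟨hX, hK, hone₁, hspan₁⟩ := isSCT_iff_span_sigmaChar_eq.1 h1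
  obtain ⟨hY, hL, hone₂, hspan₂⟩ := isSCT_iff_span_sigmaChar_eq.1 h2
  refine isSCT_iff_span_sigmaChar_eq.2
    ⟨hX.partJoin hY, hK.partJoin hL, singleton_mem_partJoin hK hL hone₁ hone₂, ?_⟩
  rw [hX.span_sigmaChar_partJoin hY, hspan₁, hspan₂, hK.constOnParts_partJoin hL]
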